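/- Let G be a graph on n vertices and H a graph on m vertices, and let G[H] denote their lexicographic product: the graph on vertex set V(G) × V(H) in which (u,x) and (v,y) are adjacent if and only if either uv is an edge of G, or u = v and xy is an edge of H. Then I(Net, G[H]) ≥ n·I(Net, H) + m⁶·I(Net, G). -/

import Mathlib

open SimpleGraph

/-- Number of vertex subsets of `G` whose induced subgraph is isomorphic to `H`. -/
noncomputable def inducedCount {α β : Type*} [Fintype α] [Fintype β]
    (H : SimpleGraph α) (G : SimpleGraph β) : ℕ :=
  Set.ncard {S : Finset β | Nonempty (H ≃g (G.induce (S : Set β)))}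

/-- Maximum of `inducedCount H G` over all graphs `G` on `n` vertices. -/
noncomputable def maxCount {α : Type*} [Fintype α] (H : SimpleGraph α) (n : ℕ) : ℕ :=
  sSup {m | ∃ G : SimpleGraph (Fin n), inducedCount H G = m}

/-- The net graph: a triangle on `{3,4,5}` with pendant vertices `0,1,2`
attached to `3,4,5` respectively (0-indexed version of vertices 1..6). -/
def netGraph : SimpleGraph (Fin 6) :=
  SimpleGraph.fromRel (fun a b =>
    (a = 3 ∧ b = 4) ∨ (a = 4 ∧ b = 5) ∨ (a = 3 ∧ b = 5) ∨
    (a = 0 ∧ b = 3) ∨ (a = 1 ∧ b = 4) ∨ (a = 2 ∧ b = 5))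

/-- `N(n)`: the maximum number of induced copies of the net among graphs on `n` vertices. -/
noncomputable def netMax (n : ℕ) : ℕ := maxCount netGraph n

/-- The lexicographic product `G[H]`: `(u,x)` and `(v,y)` are adjacent iff
`uv` is an edge of `G`, or `u = v` and `xy` is an edge of `H`. -/
def lexProd {α β : Type*} (G : SimpleGraph α) (H : SimpleGraph β) :
    SimpleGraph (α × β) where
  Adj p q := G.Adj p.1 q.1 ∨ (p.1 = q.1 ∧ H.Adj p.2 q.2)
  symm := ⟨by
    rintro p q (h | ⟨h1, h2⟩)
    · exact Or.inl h.symm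
    · exact Or.inr ⟨h1.symm, h2.symm⟩⟩
  loopless := ⟨by
    rintro p (h | ⟨_, h2⟩)
    · exact G.irrefl h
    · exact H.irrefl h2⟩

/-!
An induced copy of `K` in `G[H]` may lie inside a single fiber `{u} × V(H)`, where `G[H]` looks
like `H`, or may meet every fiber at most once, where `G[H]` looks like `G`: each copy of `K` in
`G` lifts to `|V(H)| ^ |V(K)|` such transversal copies, one for each choice of a vertex in the
fiber above each of its vertices. As soon as `K` has two vertices, no copy is of both kinds.
-/

open SimpleGraph Finset
open scoped Classical

section LexProd

variable {α β : Type*} (G : SimpleGraph α) (H : SimpleGraph β)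

@[simps]
def lexProdRight (u : α) : H ↪g lexProd G H where
  toFun := Prod.mk u
  inj' _ _ := congr_arg Prod.snd
  map_rel_iff' {x y} := by
    change G.Adj u u ∨ (u = u ∧ H.Adj x y) ↔ H.Adj x y
    simp

@[simps]
def lexProdSection (s : Set α) (g : s → β) : G.induce s ↪g lexProd G H where
  toFun v := (v, g v)
  inj' _ _ h := Subtype.ext (congr_arg Prod.fst h)
  map_rel_iff' {v w} := by
    refine ⟨?_, Or.inl⟩
    rintro (h | ⟨hvw, h⟩)
    · exact h
    · cases Subtype.ext hvw
      exact (H.irrefl h).elim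

lemma mem_map_lexProdSection {T : Finset α} {g : ↥(T : Set α) → β} {p : α × β} :
    p ∈ univ.map (lexProdSection G H T g).toEmbedding ↔ ∃ h : p.1 ∈ T, g ⟨p.1, h⟩ = p.2 := by
  obtain ⟨v, x⟩ := p
  simp only [mem_map, mem_univ, true_and, RelEmbedding.coe_toEmbedding, lexProdSection_apply,
    Subtype.exists, Prod.mk.injEq]
  constructor
  · rintro ⟨a, ha, rfl, rfl⟩
    exact ⟨ha, rfl⟩
  · rintro ⟨ha, hx⟩
    exact ⟨v, ha, rfl, hx⟩

end LexProd

section InducedCopies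

variable {κ α β : Type*} [Fintype κ] [Fintype α] [Fintype β]

omit [Fintype κ] in
noncomputable def inducedCopies (K : SimpleGraph κ) (G : SimpleGraph α) : Finset (Finset α) :=
  univ.filter fun S => Nonempty (K ≃g G.induce (S : Set α))

variable {K : SimpleGraph κ} {G : SimpleGraph α}

omit [Fintype κ] in
lemma mem_inducedCopies {S : Finset α} :
    S ∈ inducedCopies K G ↔ Nonempty (K ≃g G.induce (S : Set α)) := by
  simp [inducedCopies]

lemma inducedCount_eq_card_inducedCopies (K : SimpleGraph κ) (G : SimpleGraph α) :
    inducedCount K G = #(inducedCopies K G) := by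
  rw [inducedCount, ← Set.ncard_coe_finset]
  congr 1
  ext S
  simp [mem_inducedCopies]

lemma card_eq_of_mem_inducedCopies {S : Finset α} (hS : S ∈ inducedCopies K G) :
    #S = Fintype.card κ := by
  obtain ⟨e⟩ := mem_inducedCopies.mp hS
  simpa using (Fintype.card_congr e.toEquiv).symm

omit [Fintype κ] in
lemma mem_inducedCopies_of_embedding {G' : SimpleGraph β} {S : Finset α} {W : Finset β}
    (hS : S ∈ inducedCopies K G) (f : G.induce (S : Set α) ↪g G')
    (hW : (W : Set β) = Set.range f) : W ∈ inducedCopies K G' := by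
  obtain ⟨e⟩ := mem_inducedCopies.mp hS
  exact mem_inducedCopies.mpr (hW ▸ ⟨e.trans f.isoInduceRange⟩)

end InducedCopies

section LexProdCopies

variable {κ α β : Type*} [Fintype κ] [Fintype α] [Fintype β]
  (K : SimpleGraph κ) (G : SimpleGraph α) (H : SimpleGraph β)

variable (α) in
noncomputable def fiberCopies : Finset (Finset (α × β)) :=
  (univ ×ˢ inducedCopies K H).image fun p => {p.1} ×ˢ p.2

noncomputable def transversalCopies : Finset (Finset (α × β)) :=
  ((inducedCopies K G).sigma fun T => (univ : Finset (↥(T : Set α) → β))).image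
    fun p => univ.map (lexProdSection G H p.1 p.2).toEmbedding

omit [Fintype κ] in
lemma fiberCopies_subset : fiberCopies α K H ⊆ inducedCopies K (lexProd G H) := by
  intro W hW
  obtain ⟨⟨u, S⟩, hp, rfl⟩ := mem_image.mp hW
  refine mem_inducedCopies_of_embedding (mem_product.mp hp).2
    ((lexProdRight G H u).comp (Embedding.induce _)) ?_
  ext ⟨v, x⟩
  simp [and_comm, eq_comm]

omit [Fintype κ] in
lemma transversalCopies_subset : transversalCopies K G H ⊆ inducedCopies K (lexProd G H) := by
  intro W hW
  obtain ⟨⟨T, g⟩, hp, rfl⟩ := mem_image.mp hW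
  exact mem_inducedCopies_of_embedding (mem_sigma.mp hp).1 (lexProdSection G H T g)
    (by simp)

lemma card_fiberCopies [Nonempty κ] :
    #(fiberCopies α K H) = Fintype.card α * inducedCount K H := by
  rw [fiberCopies, card_image_of_injOn, card_product, card_univ,
    inducedCount_eq_card_inducedCopies]
  rintro ⟨u, S⟩ hS ⟨u', S'⟩ - (h : {u} ×ˢ S = {u'} ×ˢ S')
  have hne : S.Nonempty := by
    rw [← card_pos, card_eq_of_mem_inducedCopies (mem_product.mp hS).2]
    exact Fintype.card_pos
  have hne' : S'.Nonempty := (nonempty_product.mp (h ▸ (singleton_nonempty u).product hne)).2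
  have hu : ({u} : Finset α) = {u'} := by
    rw [← product_image_fst (s := {u}) hne, h, product_image_fst hne']
  have hS : S = S' := by
    rw [← product_image_snd (t := S) (singleton_nonempty u), h,
      product_image_snd (singleton_nonempty u')]
  rw [singleton_inj.mp hu, hS]

lemma card_transversalCopies :
    #(transversalCopies K G H) = Fintype.card β ^ Fintype.card κ * inducedCount K G := by
  rw [transversalCopies, card_image_of_injOn, card_sigma, inducedCount_eq_card_inducedCopies,
    mul_comm, ← smul_eq_mul, ← sum_const]
  · refine sum_congr rfl fun T hT => ?_
    simp [card_eq_of_mem_inducedCopies hT]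
  rintro ⟨T, g⟩ - ⟨T', g'⟩ - h
  have hmem (p : α × β) :
      (∃ h : p.1 ∈ T, g ⟨p.1, h⟩ = p.2) ↔ ∃ h : p.1 ∈ T', g' ⟨p.1, h⟩ = p.2 := by
    rw [← mem_map_lexProdSection, ← mem_map_lexProdSection]
    exact Eq.to_iff (congr_arg (p ∈ ·) h)
  obtain rfl : T = T' := by
    ext v
    exact ⟨fun hv => ((hmem (v, g ⟨v, hv⟩)).mp ⟨hv, rfl⟩).1,
      fun hv => ((hmem (v, g' ⟨v, hv⟩)).mpr ⟨hv, rfl⟩).1⟩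
  congr
  funext v
  exact ((hmem (v, g v)).mp ⟨v.2, rfl⟩).2.symm

lemma disjoint_fiberCopies_transversalCopies [Nontrivial κ] :
    Disjoint (fiberCopies α K H) (transversalCopies K G H) := by
  refine Finset.disjoint_left.mpr fun W hW₁ hW₂ => ?_
  obtain ⟨⟨u, S⟩, hS, rfl⟩ := mem_image.mp hW₁
  obtain ⟨⟨T, g⟩, -, h⟩ := mem_image.mp hW₂
  have : 1 < #S := by
    rw [card_eq_of_mem_inducedCopies (mem_product.mp hS).2]
    exact Fintype.one_lt_card
  obtain ⟨x, hx, y, hy, hxy⟩ := one_lt_card.mp this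
  have hmem {z : β} (hz : z ∈ S) : ∃ h : u ∈ T, g ⟨u, h⟩ = z := by
    rw [← mem_map_lexProdSection (p := (u, z)), h]
    exact mk_mem_product (mem_singleton_self u) hz
  obtain ⟨_, hgx⟩ := hmem hx
  obtain ⟨_, hgy⟩ := hmem hy
  exact hxy (hgx.symm.trans hgy)

end LexProdCopies

theorem card_mul_inducedCount_add_le_inducedCount_lexProd {κ α β : Type*} [Fintype κ]
    [Nontrivial κ] [Fintype α] [Fintype β] (K : SimpleGraph κ) (G : SimpleGraph α)
    (H : SimpleGraph β) :
    Fintype.card α * inducedCount K H + Fintype.card β ^ Fintype.card κ * inducedCount K G ≤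
      inducedCount K (lexProd G H) := by
  rw [← card_fiberCopies, ← card_transversalCopies K G H,
    ← card_union_of_disjoint (disjoint_fiberCopies_transversalCopies K G H),
    inducedCount_eq_card_inducedCopies]
  exact card_le_card (union_subset (fiberCopies_subset K G H) (transversalCopies_subset K G H))

theorem lexProd_net_count_lower_bound
    (n m : ℕ) (G : SimpleGraph (Fin n)) (H : SimpleGraph (Fin m)) :
    n * inducedCount netGraph H + m ^ 6 * inducedCount netGraph G ≤
      inducedCount netGraph (lexProd G H) := by
  simpa using card_mul_inducedCount_add_le_inducedCount_lexProd netGraph G H
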